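/- arXiv:2007.05567 — 3 statements merged into one kernel-verified Lean document; each statement's English description precedes it below -/
import Mathlib

section
/- Let S = ⟨a_1,…,a_n⟩ ⊆ ℤ^m ⊕ T be a reduced monoid and let B = {b_1,…,b_s} ⊆ S ∖ {0}. For each i choose a factorization β_i = (β_{i1},…,β_{in}) ∈ ℕ^n of b_i and set the monomial x^{β_i} = x_1^{β_{i1}} ⋯ x_n^{β_{in}} ∈ K[x_1,…,x_n]. If D is any monomial K-basis of the quotient K[x_1,…,x_n] / (I_S + ⟨x^{β_1},…, x^{β_s}⟩), then the map h : D → Ap_S(B) sending a monomial x^α to deg_S(x^α) = α_1 a_1 + ⋯ + α_n a_n is a bijection. -/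
/-! The algebra map `x_i ↦ t^{a_i}` from `K[x_1,…,x_n]` to the semigroup algebra `K[S]` kills `I_S`
and sends `J` into the monomial ideal `⟨t^{b_1},…,t^{b_s}⟩`, whose elements have no Apéry element in
their support. So for `y ∈ Ap_S(B)` the coefficient of `t^y` is a linear form vanishing on `J` and
equal to `1` on every monomial of degree `y`; writing such a monomial in the basis `D` modulo `J`
forces some element of `D` to have degree `y`. Conversely, an element of `D` whose degree `y` has
`y - b_i ∈ S` lies in `J`, since `x^d ≡ x^{γ + β_i}` modulo the binomials, and two elements of `D`
of equal degree are congruent modulo `J`. -/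

open MvPolynomial

/-- The `S`-degree of an exponent vector: `deg_S(x^lam) = lam_1 • a_1 + ⋯ + lam_n • a_n`. -/
def degS {n : ℕ} {G : Type*} [AddCommMonoid G] (a : Fin n → G) (lam : Fin n → ℕ) : G :=
  ∑ i, lam i • a i

/-- The lattice ideal of the monoid generated by `a`: the ideal generated by all binomials
`x^α - x^β` with `deg_S(x^α) = deg_S(x^β)`. -/
noncomputable def latticeIdeal (K : Type) [Field K] {n : ℕ} {G : Type*} [AddCommMonoid G]
    (a : Fin n → G) : Ideal (MvPolynomial (Fin n) K) :=
  Ideal.span {f | ∃ α β : Fin n →₀ ℕ, degS a ⇑α = degS a ⇑β ∧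
    f = monomial α (1 : K) - monomial β 1}

/-- The Apéry set of the monoid generated by `a` with respect to the family `b`. -/
def apery {n s : ℕ} {G : Type*} [AddCommGroup G] (a : Fin n → G) (b : Fin s → G) : Set G :=
  {x | x ∈ AddSubmonoid.closure (Set.range a) ∧
    ∀ i, x - b i ∉ AddSubmonoid.closure (Set.range a)}

open AddMonoidAlgebra

section Degree

variable {n : ℕ} {M : Type*} [AddCommMonoid M] (a : Fin n → M)

theorem degS_add (α β : Fin n →₀ ℕ) : degS a ⇑(α + β) = degS a ⇑α + degS a ⇑β := by
  simp only [degS, Finsupp.coe_add, Pi.add_apply, add_smul, Finset.sum_add_distrib]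

theorem map_degS {N F : Type*} [AddCommMonoid N] [FunLike F M N] [AddMonoidHomClass F M N]
    (f : F) (α : Fin n → ℕ) : f (degS a α) = degS (f ∘ a) α := by
  simp only [degS, map_sum, map_nsmul, Function.comp_apply]

theorem mem_closure_range_iff_exists_degS {x : M} :
    x ∈ AddSubmonoid.closure (Set.range a) ↔ ∃ α : Fin n →₀ ℕ, degS a ⇑α = x := by
  simp only [AddSubmonoid.mem_closure_range_iff, zero_nsmul, implies_true, Finsupp.sum_fintype,
    degS, eq_comm]

end Degree

section SemigroupAlgebra

variable (K : Type*) [CommSemiring K] {n : ℕ} {M : Type*} [AddCommMonoid M] (a : Fin n → M)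

noncomputable def toAddMonoidAlgebra : MvPolynomial (Fin n) K →ₐ[K] AddMonoidAlgebra K M :=
  aeval fun i => of' K M (a i)

theorem toAddMonoidAlgebra_monomial (α : Fin n →₀ ℕ) (r : K) :
    toAddMonoidAlgebra K a (monomial α r) = single (degS a ⇑α) r := by
  rw [toAddMonoidAlgebra, aeval_monomial, Finsupp.prod_fintype _ _ fun _ => pow_zero _]
  simp only [coe_algebraMap, Algebra.algebraMap_self, RingHom.coe_id, Function.comp_apply, id_eq,
    of'_apply, single_pow, one_pow, prod_single, Finset.prod_const_one, single_mul_single, zero_add,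
    mul_one, degS]

end SemigroupAlgebra

theorem exists_apply_ne_zero_of_mk_mem_span {K A W ι : Type*} [CommSemiring K] [CommRing A]
    [Algebra K A] [AddCommMonoid W] [Module K W] {I : Ideal A} (ℓ : A →ₗ[K] W)
    (hℓ : ∀ f ∈ I, ℓ f = 0) {v : ι → A} {x : A}
    (hx : Ideal.Quotient.mk I x ∈ Submodule.span K (Set.range fun i => Ideal.Quotient.mk I (v i)))
    (hℓx : ℓ x ≠ 0) : ∃ i, ℓ (v i) ≠ 0 := by
  by_contra! h
  have hrange : (Set.range fun i => Ideal.Quotient.mk I (v i)) =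
      (Ideal.Quotient.mkₐ K I).toLinearMap '' Set.range v := by
    rw [← Set.range_comp]; rfl
  rw [hrange, Submodule.span_image] at hx
  obtain ⟨p, hp, hpx⟩ := Submodule.mem_map.1 hx
  have hxp : x - p ∈ I := Ideal.Quotient.eq.1 hpx.symm
  have hℓp : ℓ p = 0 := (Submodule.span_le (p := LinearMap.ker ℓ)).2 (Set.range_subset_iff.2 h) hp
  exact hℓx (by rw [← sub_add_cancel x p, map_add, hℓ _ hxp, hℓp, add_zero])

section Apery

variable {n s : ℕ} {G : Type*} [AddCommGroup G] (K : Type) [Field K] (a : Fin n → G)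

local notation "S" => AddSubmonoid.closure (Set.range a)

def toClosure : Fin n → S :=
  fun i => ⟨a i, AddSubmonoid.subset_closure (Set.mem_range_self i)⟩

theorem coe_degS_toClosure (α : Fin n → ℕ) : ((degS (toClosure a) α : S) : G) = degS a α :=
  map_degS _ (AddSubmonoid.subtype _) α

/-- The ideal `J = I_S + ⟨x^{β_1}, …, x^{β_s}⟩`. -/
noncomputable def aperyIdeal (β : Fin s → Fin n →₀ ℕ) : Ideal (MvPolynomial (Fin n) K) :=
  latticeIdeal K a + Ideal.span (Set.range fun i => monomial (β i) (1 : K))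

theorem latticeIdeal_le_ker :
    latticeIdeal K a ≤ RingHom.ker (toAddMonoidAlgebra K (toClosure a)) := by
  refine Ideal.span_le.2 ?_
  rintro _ ⟨α, α', h, rfl⟩
  have : degS (toClosure a) ⇑α = degS (toClosure a) ⇑α' :=
    Subtype.ext (by rw [coe_degS_toClosure, coe_degS_toClosure, h])
  simp only [SetLike.mem_coe, RingHom.mem_ker, map_sub, toAddMonoidAlgebra_monomial, this, sub_self]

theorem binomial_mem_aperyIdeal (β : Fin s → Fin n →₀ ℕ) {α α' : Fin n →₀ ℕ}
    (h : degS a ⇑α = degS a ⇑α') : monomial α (1 : K) - monomial α' 1 ∈ aperyIdeal K a β :=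
  Ideal.mem_sup_left (Ideal.subset_span ⟨α, α', h, rfl⟩)

theorem monomial_mem_aperyIdeal (β : Fin s → Fin n →₀ ℕ) {α : Fin n →₀ ℕ} {i : Fin s}
    (h : degS a ⇑α - degS a ⇑(β i) ∈ S) : monomial α (1 : K) ∈ aperyIdeal K a β := by
  obtain ⟨γ, hγ⟩ := (mem_closure_range_iff_exists_degS a).1 h
  have hdeg : degS a ⇑α = degS a ⇑(γ + β i) := by rw [degS_add, hγ, sub_add_cancel]
  have hmul : monomial (γ + β i) (1 : K) ∈ aperyIdeal K a β := by
    rw [← mul_one (1 : K), ← monomial_mul]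
    exact Ideal.mem_sup_right (Ideal.mul_mem_left _ _ (Ideal.subset_span ⟨i, rfl⟩))
  simpa using add_mem (binomial_mem_aperyIdeal K a β hdeg) hmul

theorem aperyIdeal_le_comap (β : Fin s → Fin n →₀ ℕ) :
    aperyIdeal K a β ≤ (Ideal.span (of' K S '' Set.range fun i => degS (toClosure a) ⇑(β i))).comap
      (toAddMonoidAlgebra K (toClosure a)) := by
  refine sup_le ((latticeIdeal_le_ker K a).trans (Ideal.comap_mono bot_le)) (Ideal.span_le.2 ?_)
  rintro _ ⟨i, rfl⟩
  rw [SetLike.mem_coe, Ideal.mem_comap, toAddMonoidAlgebra_monomial, ← of'_apply]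
  exact Ideal.subset_span ⟨_, ⟨i, rfl⟩, rfl⟩

/-- The coefficient of `t^y` in the image of `f` in `K[S]`, i.e. the sum of the coefficients of
`f` at the exponents of `S`-degree `y`. -/
noncomputable def degCoeff (y : S) : MvPolynomial (Fin n) K →ₗ[K] K :=
  (AddMonoidAlgebra.basis S K).coord y ∘ₗ (toAddMonoidAlgebra K (toClosure a)).toLinearMap

theorem degCoeff_apply (y : S) (f : MvPolynomial (Fin n) K) :
    degCoeff K a y f = (toAddMonoidAlgebra K (toClosure a) f).coeff y :=
  rfl

theorem degCoeff_monomial_ne_zero_iff {y : S} {α : Fin n →₀ ℕ} :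
    degCoeff K a y (monomial α 1) ≠ 0 ↔ degS a ⇑α = y := by
  rw [degCoeff_apply, toAddMonoidAlgebra_monomial, coeff_single,
    Finsupp.single_apply_ne_zero, and_iff_left one_ne_zero, eq_comm, Subtype.ext_iff,
    coe_degS_toClosure]

theorem degCoeff_eq_zero_of_mem_aperyIdeal {β : Fin s → Fin n →₀ ℕ} {f : MvPolynomial (Fin n) K}
    (hf : f ∈ aperyIdeal K a β) {y : S} (hy : ↑y ∈ apery a fun i => degS a ⇑(β i)) :
    degCoeff K a y f = 0 := by
  by_contra hne
  obtain ⟨_, ⟨i, rfl⟩, z, rfl⟩ :=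
    mem_ideal_span_of'_image.1 (aperyIdeal_le_comap K a β hf) y (Finsupp.mem_support_iff.2 hne)
  refine hy.2 i ?_
  rw [AddSubmonoid.coe_add, coe_degS_toClosure, add_sub_cancel_right]
  exact z.2

end Apery

theorem apery_monomial_basis_bijection_general
    {m n s : ℕ} {T : Type} [AddCommGroup T]
    (K : Type) [Field K]
    (a : Fin n → (Fin m → ℤ) × T)
    (b : Fin s → (Fin m → ℤ) × T)
    -- `β i` is a factorization of `b i`:
    (β : Fin s → (Fin n →₀ ℕ))
    (hβ : ∀ i, degS a ⇑(β i) = b i)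
    (J : Ideal (MvPolynomial (Fin n) K))
    (hJ : J = latticeIdeal K a + Ideal.span (Set.range fun i => monomial (β i) (1 : K)))
    -- `D` is a monomial `K`-basis of `K[x]/J`:
    (D : Set (Fin n →₀ ℕ))
    (hD_li : LinearIndependent K
      (fun d : D => Ideal.Quotient.mk J (monomial d.val (1 : K))))
    (hD_span : Submodule.span K
      (Set.range fun d : D => Ideal.Quotient.mk J (monomial d.val (1 : K))) = ⊤) :
    Set.BijOn (fun α : Fin n →₀ ℕ => degS a ⇑α) D (apery a b) := by
  obtain rfl : b = fun i => degS a ⇑(β i) := funext fun i => (hβ i).symm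
  change J = aperyIdeal K a β at hJ
  subst hJ
  refine ⟨fun d hd => ⟨(mem_closure_range_iff_exists_degS a).2 ⟨d, rfl⟩, fun i hi => ?_⟩,
    fun d hd d' hd' h => ?_, fun y hy => ?_⟩
  · have hdJ := monomial_mem_aperyIdeal K a β hi
    exact hD_li.ne_zero ⟨d, hd⟩ (Ideal.Quotient.eq_zero_iff_mem.2 hdJ)
  · exact congrArg Subtype.val (hD_li.injective (a₁ := ⟨d, hd⟩) (a₂ := ⟨d', hd'⟩)
      (Ideal.Quotient.eq.2 (binomial_mem_aperyIdeal K a β h)))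
  · obtain ⟨α, hα⟩ := (mem_closure_range_iff_exists_degS a).1 hy.1
    obtain ⟨d, hd⟩ := exists_apply_ne_zero_of_mk_mem_span (degCoeff K a ⟨y, hy.1⟩)
      (fun f hf => degCoeff_eq_zero_of_mem_aperyIdeal K a hf hy) (hD_span ▸ Submodule.mem_top)
      (degCoeff_monomial_ne_zero_iff K a |>.2 hα)
    exact ⟨d, d.2, (degCoeff_monomial_ne_zero_iff K a).1 hd⟩

/-- **Theorem (Apéry sets via the lattice ideal).**
Let `S = ⟨a_1,…,a_n⟩ ⊆ ℤ^m ⊕ T` be a reduced monoid, `B = {b_1,…,b_s} ⊆ S \ {0}`,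
`β_i` a factorization of `b_i`, and `J = I_S + ⟨x^{β_1},…,x^{β_s}⟩`.  If `D` is a
monomial `K`-basis of `K[x_1,…,x_n]/J` (identifying monomials with their exponent
vectors), then `x^α ↦ deg_S(x^α)` is a bijection from `D` onto `Ap_S(B)`. -/
theorem apery_monomial_basis_bijection
    {m n s : ℕ} {T : Type} [AddCommGroup T] [Fintype T]
    (K : Type) [Field K]
    (a : Fin n → (Fin m → ℤ) × T)
    -- `S` is reduced:
    (hred : ∀ x, x ∈ AddSubmonoid.closure (Set.range a) →
      -x ∈ AddSubmonoid.closure (Set.range a) → x = 0)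
    -- `a` is the minimal set of generators:
    (hmin : ∀ i, a i ∉ AddSubmonoid.closure (Set.range a \ {a i}))
    (b : Fin s → (Fin m → ℤ) × T)
    (hbS : ∀ i, b i ∈ AddSubmonoid.closure (Set.range a))
    (hb0 : ∀ i, b i ≠ 0)
    -- `β i` is a factorization of `b i`:
    (β : Fin s → (Fin n →₀ ℕ))
    (hβ : ∀ i, degS a ⇑(β i) = b i)
    (J : Ideal (MvPolynomial (Fin n) K))
    (hJ : J = latticeIdeal K a + Ideal.span (Set.range fun i => monomial (β i) (1 : K)))
    -- `D` is a monomial `K`-basis of `K[x]/J`: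
    (D : Set (Fin n →₀ ℕ))
    (hD_li : LinearIndependent K
      (fun d : D => Ideal.Quotient.mk J (monomial d.val (1 : K))))
    (hD_span : Submodule.span K
      (Set.range fun d : D => Ideal.Quotient.mk J (monomial d.val (1 : K))) = ⊤) :
    Set.BijOn (fun α : Fin n →₀ ℕ => degS a ⇑α) D (apery a b) :=
  apery_monomial_basis_bijection_general K a b β hβ J hJ D hD_li hD_span
end

section
/- Let S = ⟨a_1,…,a_n⟩ ⊆ ℤ^m ⊕ T be a reduced monoid and let S̃ = ⟨(a_1,1),…,(a_n,1)⟩ ⊆ ℤ^{m+1} ⊕ T. Then L_S = { x_1 ∈ ℤ^m ⊕ T : (x_1, x_2) ∈ T_{S̃} for some x_2 ∈ ℕ }, where the pair (x_1,x_2) is formed via the identification ℤ^{m+1} ⊕ T ≅ (ℤ^m ⊕ T) × ℤ. -/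
/-- The set of elements of `S = ⟨a_1,…,a_n⟩` having at least two different factorizations. -/
def TSet {n : ℕ} {G : Type*} [AddCommMonoid G] (a : Fin n → G) : Set G :=
  {x | ∃ lam nu : Fin n → ℕ, lam ≠ nu ∧ degS a lam = x ∧ degS a nu = x}

/-- The set of elements of `S = ⟨a_1,…,a_n⟩` having at least two different factorizations
of the same length. -/
def LSet {n : ℕ} {G : Type*} [AddCommMonoid G] (a : Fin n → G) : Set G :=
  {x | ∃ lam nu : Fin n → ℕ, lam ≠ nu ∧ degS a lam = x ∧ degS a nu = x ∧
    ∑ i, lam i = ∑ i, nu i}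

lemma degS_tilde {n : ℕ} {G : Type*} [AddCommMonoid G] (a : Fin n → G) (lam : Fin n → ℕ) :
    degS (fun i => ((a i, (1 : ℤ)) : G × ℤ)) lam = (degS a lam, ((∑ i, lam i : ℕ) : ℤ)) := by
  simp [degS, Prod.ext_iff, Prod.fst_sum, Prod.snd_sum]

/-- **Lemma.** Let `S = ⟨a_1,…,a_n⟩ ⊆ ℤ^m ⊕ T` be a reduced monoid and
`S̃ = ⟨(a_1,1),…,(a_n,1)⟩ ⊆ ℤ^{m+1} ⊕ T ≅ (ℤ^m ⊕ T) × ℤ`.  Then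
`L_S = { x₁ : (x₁,x₂) ∈ T_{S̃} for some x₂ ∈ ℕ }`. -/
theorem LSet_eq_proj_TSet_tilde
    {m n : ℕ} {T : Type} [AddCommGroup T] [Fintype T]
    (a : Fin n → (Fin m → ℤ) × T)
    -- `S` is reduced:
    (hred : ∀ x, x ∈ AddSubmonoid.closure (Set.range a) →
      -x ∈ AddSubmonoid.closure (Set.range a) → x = 0)
    -- `a` is the minimal set of generators:
    (hmin : ∀ i, a i ∉ AddSubmonoid.closure (Set.range a \ {a i})) :
    LSet a = {x : (Fin m → ℤ) × T |
      ∃ k : ℕ, ((x, (k : ℤ)) : ((Fin m → ℤ) × T) × ℤ) ∈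
        TSet (fun i => ((a i, (1 : ℤ)) : ((Fin m → ℤ) × T) × ℤ))} := by
  ext x
  constructor
  · rintro ⟨lam, nu, hne, h1, h2, hlen⟩
    exact ⟨∑ i, lam i, lam, nu, hne, by rw [degS_tilde, h1], by rw [degS_tilde, h2, hlen]⟩
  · rintro ⟨k, lam, nu, hne, h1, h2⟩
    rw [degS_tilde, Prod.mk.injEq] at h1 h2
    exact ⟨lam, nu, hne, h1.1, h2.1, by
      have := h1.2.trans h2.2.symm; exact_mod_cast this⟩
end

section
/- Let S = ⟨a_1, a_2, a_3⟩ ⊆ ℕ be a numerical semigroup given by its minimal set of generators with a_1 < a_2 < a_3. Then c_eq(S) = (a_3 − a_1) / gcd(a_2 − a_1, a_3 − a_1). -/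
/-- The distance between two factorizations. -/
def factDist {n : ℕ} (lam nu : Fin n → ℕ) : ℕ :=
  ∑ i, (lam i - min (lam i) (nu i))

/-- An `N`-chain of factorizations of `b`, all of the same length, joining `lam` to `nu`. -/
def IsEqChain {n : ℕ} {G : Type*} [AddCommMonoid G] (a : Fin n → G) (b : G) (N : ℕ∞)
    (lam nu : Fin n → ℕ) : Prop :=
  ∃ k, ∃ γ : Fin (k + 1) → (Fin n → ℕ),
    γ 0 = lam ∧ γ (Fin.last k) = nu ∧
    (∀ j, degS a (γ j) = b ∧ ∑ i, γ j i = ∑ i, lam i) ∧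
    (∀ j : Fin k, (factDist (γ j.castSucc) (γ j.succ) : ℕ∞) ≤ N)

/-- The equal catenary degree of an element `b`. -/
noncomputable def ceqElem {n : ℕ} {G : Type*} [AddCommMonoid G] (a : Fin n → G) (b : G) :
    ℕ∞ :=
  sInf {N : ℕ∞ | ∀ lam nu : Fin n → ℕ, degS a lam = b → degS a nu = b →
    ∑ i, lam i = ∑ i, nu i → IsEqChain a b N lam nu}

/-- The equal catenary degree of the monoid generated by `a`. -/
noncomputable def ceq {n : ℕ} {G : Type*} [AddCommMonoid G] (a : Fin n → G) : ℕ∞ :=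
  ⨆ b ∈ AddSubmonoid.closure (Set.range a), ceqElem a b

/-!
Two factorizations of the same element with the same length differ by an integer vector `δ`
with `δ₀ + δ₁ + δ₂ = 0` and `δ₁ (a₁ - a₀) + δ₂ (a₂ - a₀) = 0`. Writing `a₁ - a₀ = r g`,
`a₂ - a₀ = q g` with `g` the gcd, so that `q` and `r` are coprime, these `δ` are exactly the
multiples of `w = (q - r, -q, r)` (`tradeVec q r`). Hence two such factorizations are joined
by walking along `±w`, each coordinate moving monotonically so that all intermediate points are
factorizations, and each step has distance `q` since the positive and the negative part of `w`
both sum to `q`. Conversely, a step between distinct factorizations is a nonzero multiple of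
`w` and so has distance at least `q`; the factorizations `(0, q, 0)` and `(q - r, 0, r)` of
`q a₁` must be joined by such steps.
-/

section General

variable {n : ℕ}

lemma Int.toNat_natCast_mul (m : ℕ) (y : ℤ) : ((m : ℤ) * y).toNat = m * y.toNat := by
  rcases le_total 0 y with hy | hy
  · rw [Int.toNat_mul (by positivity) hy, Int.toNat_natCast]
  · rw [Int.toNat_of_nonpos hy,
      Int.toNat_of_nonpos (mul_nonpos_of_nonneg_of_nonpos (by positivity) hy), mul_zero]

lemma Fin.exists_castSucc_ne_succ {α : Type*} {k : ℕ} {γ : Fin (k + 1) → α}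
    (h : γ 0 ≠ γ (Fin.last k)) : ∃ j : Fin k, γ j.castSucc ≠ γ j.succ := by
  by_contra! hconst
  exact h (Fin.induction rfl (fun j ih => ih.trans (hconst j)) (Fin.last k))

lemma sum_toNat_neg_eq_sum_toNat {w : Fin n → ℤ} (hw : ∑ i, w i = 0) :
    ∑ i, (-w i).toNat = ∑ i, (w i).toNat := by
  have h : ∑ i, (((w i).toNat : ℤ) - (-w i).toNat) = 0 := by
    simpa only [Int.toNat_sub_toNat_neg] using hw
  rw [Finset.sum_sub_distrib, sub_eq_zero] at h
  exact_mod_cast h.symm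

lemma natCast_degS (a lam : Fin n → ℕ) : ((degS a lam : ℕ) : ℤ) = ∑ i, (lam i : ℤ) * a i := by
  simp [degS]

lemma factDist_eq_sum_toNat (lam nu : Fin n → ℕ) :
    factDist lam nu = ∑ i, ((lam i : ℤ) - nu i).toNat :=
  Finset.sum_congr rfl fun _ _ => by omega

section Trade

variable {w : Fin n → ℤ} {lam nu : Fin n → ℕ} {k : ℤ}

lemma degS_eq_of_eq_add_mul {a : Fin n → ℕ} (hw : ∑ i, w i * a i = 0)
    (h : ∀ i, (nu i : ℤ) = lam i + k * w i) : degS a nu = degS a lam := by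
  have : ((degS a nu : ℕ) : ℤ) = degS a lam := by
    simp only [natCast_degS, h, add_mul, Finset.sum_add_distrib, mul_assoc, ← Finset.mul_sum,
      hw, mul_zero, add_zero]
  exact_mod_cast this

lemma sum_eq_of_eq_add_mul (hw : ∑ i, w i = 0) (h : ∀ i, (nu i : ℤ) = lam i + k * w i) :
    ∑ i, nu i = ∑ i, lam i := by
  have : ((∑ i, nu i : ℕ) : ℤ) = ∑ i, lam i := by
    push_cast
    simp only [h, Finset.sum_add_distrib, ← Finset.mul_sum, hw, mul_zero, add_zero]
  exact_mod_cast this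

lemma factDist_eq_natAbs_mul (hw : ∑ i, w i = 0) (h : ∀ i, (nu i : ℤ) = lam i + k * w i) :
    factDist lam nu = k.natAbs * ∑ i, (-w i).toNat := by
  have hdiff : ∀ i, (lam i : ℤ) - nu i = -(k * w i) := fun i => by rw [h i]; ring
  simp only [factDist_eq_sum_toNat, hdiff]
  obtain ⟨m, rfl | rfl⟩ := Int.eq_nat_or_neg k
  · simp only [← mul_neg, Int.toNat_natCast_mul, ← Finset.mul_sum, Int.natAbs_natCast]
  · simp only [neg_mul, neg_neg, Int.toNat_natCast_mul, ← Finset.mul_sum, Int.natAbs_neg,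
      Int.natAbs_natCast, sum_toNat_neg_eq_sum_toNat hw]

lemma isEqChain_of_eq_add_nsmul (a : Fin n → ℕ) (hdeg : ∑ i, w i * a i = 0)
    (hlen : ∑ i, w i = 0) {m : ℕ} (h : ∀ i, (nu i : ℤ) = lam i + m * w i) :
    IsEqChain a (degS a lam) (∑ i, (-w i).toNat : ℕ) lam nu := by
  have hnonneg : ∀ j ≤ m, ∀ i, 0 ≤ (lam i : ℤ) + j * w i := by
    intro j hj i
    rcases le_total 0 (w i) with hwi | hwi
    · positivity
    · have : (m : ℤ) * w i ≤ j * w i := mul_le_mul_of_nonpos_right (by exact_mod_cast hj) hwi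
      linarith [h i, (nu i).cast_nonneg (α := ℤ)]
  let γ : Fin (m + 1) → Fin n → ℕ := fun j i => ((lam i : ℤ) + (j : ℕ) * w i).toNat
  have hγ : ∀ j i, (γ j i : ℤ) = lam i + (j : ℕ) * w i := fun j i =>
    Int.toNat_of_nonneg (hnonneg j (Nat.lt_succ_iff.mp j.isLt) i)
  refine ⟨m, γ, funext fun i => ?_, funext fun i => ?_,
    fun j => ⟨degS_eq_of_eq_add_mul hdeg (hγ j), sum_eq_of_eq_add_mul hlen (hγ j)⟩, fun j => ?_⟩
  · simpa using hγ 0 i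
  · have := hγ (Fin.last m) i
    rw [Fin.val_last, ← h i] at this
    exact_mod_cast this
  · rw [factDist_eq_natAbs_mul hlen (k := 1) fun i => ?_, Int.natAbs_one, one_mul]
    rw [hγ, hγ, Fin.val_succ, Fin.val_castSucc]
    push_cast
    ring

lemma isEqChain_of_eq_add_mul (a : Fin n → ℕ) (hdeg : ∑ i, w i * a i = 0)
    (hlen : ∑ i, w i = 0) (h : ∀ i, (nu i : ℤ) = lam i + k * w i) :
    IsEqChain a (degS a lam) (∑ i, (-w i).toNat : ℕ) lam nu := by
  obtain ⟨m, rfl | rfl⟩ := Int.eq_nat_or_neg k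
  · exact isEqChain_of_eq_add_nsmul a hdeg hlen h
  · rw [sum_toNat_neg_eq_sum_toNat hlen]
    simpa only [Pi.neg_apply, neg_neg] using isEqChain_of_eq_add_nsmul a (w := -w)
      (by simpa only [Pi.neg_apply, neg_mul, Finset.sum_neg_distrib, neg_eq_zero] using hdeg)
      (by simpa only [Pi.neg_apply, Finset.sum_neg_distrib, neg_eq_zero] using hlen)
      (m := m) fun i => by rw [h i, Pi.neg_apply]; ring

end Trade

section Ceq

variable {G : Type*} [AddCommMonoid G] (a : Fin n → G)

lemma degS_mem_closure (lam : Fin n → ℕ) : degS a lam ∈ AddSubmonoid.closure (Set.range a) :=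
  AddSubmonoid.sum_mem _ fun i _ =>
    AddSubmonoid.nsmul_mem _ (AddSubmonoid.subset_closure (Set.mem_range_self i)) _

lemma ceq_le_of_forall_isEqChain {N : ℕ∞}
    (h : ∀ lam nu, degS a lam = degS a nu → ∑ i, lam i = ∑ i, nu i →
      IsEqChain a (degS a lam) N lam nu) :
    ceq a ≤ N :=
  iSup₂_le fun _ _ => sInf_le fun lam nu hlam hnu hlen =>
    hlam ▸ h lam nu (hlam.trans hnu.symm) hlen

lemma le_ceq_of_forall_le_factDist {b : G} {N : ℕ} {lam nu : Fin n → ℕ}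
    (hlam : degS a lam = b) (hnu : degS a nu = b) (hlen : ∑ i, lam i = ∑ i, nu i)
    (hne : lam ≠ nu)
    (hsep : ∀ x y, degS a x = b → degS a y = b → ∑ i, x i = ∑ i, y i → x ≠ y →
      N ≤ factDist x y) :
    (N : ℕ∞) ≤ ceq a := by
  refine le_iSup₂_of_le b (hlam ▸ degS_mem_closure a lam) (le_sInf fun M hM => ?_)
  obtain ⟨k, γ, hγ0, hγk, hγ, hstep⟩ := hM lam nu hlam hnu hlen
  obtain ⟨j, hj⟩ := Fin.exists_castSucc_ne_succ (γ := γ) (by rwa [hγ0, hγk])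
  have hlen_step := (hγ j.castSucc).2.trans (hγ j.succ).2.symm
  exact (Nat.cast_le.mpr (hsep _ _ (hγ _).1 (hγ _).1 hlen_step hj)).trans (hstep j)

end Ceq

end General

section ThreeGenerated

variable {a : Fin 3 → ℕ} {g q r : ℕ}

def tradeVec (q r : ℕ) : Fin 3 → ℤ := ![(q : ℤ) - r, -q, r]

lemma sum_tradeVec (q r : ℕ) : ∑ i, tradeVec q r i = 0 := by
  simp only [tradeVec, Fin.sum_univ_three, Fin.isValue, Matrix.cons_val_zero,
    Matrix.cons_val_one, Matrix.cons_val]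
  ring

lemma sum_tradeVec_mul (hr : a 1 = a 0 + r * g) (hq : a 2 = a 0 + q * g) :
    ∑ i, tradeVec q r i * a i = 0 := by
  simp only [tradeVec, Fin.sum_univ_three, Fin.isValue, Matrix.cons_val_zero,
    Matrix.cons_val_one, Matrix.cons_val, hr, hq]
  push_cast
  ring

lemma sum_toNat_neg_tradeVec (hrq : r ≤ q) : ∑ i, (-tradeVec q r i).toNat = q := by
  simp only [tradeVec, Fin.sum_univ_three, Fin.isValue, Matrix.cons_val_zero,
    Matrix.cons_val_one, Matrix.cons_val, neg_sub, neg_neg, Int.toNat_natCast,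
    Int.toNat_neg_natCast, Int.toNat_sub']
  omega

lemma exists_eq_add_mul_tradeVec (hg : g ≠ 0) (hq0 : q ≠ 0) (hqr : q.Coprime r)
    (hr : a 1 = a 0 + r * g) (hq : a 2 = a 0 + q * g) {lam nu : Fin 3 → ℕ}
    (hdeg : degS a lam = degS a nu) (hlen : ∑ i, lam i = ∑ i, nu i) :
    ∃ k : ℤ, ∀ i, (nu i : ℤ) = lam i + k * tradeVec q r i := by
  have hdeg' := congrArg (Nat.cast : ℕ → ℤ) hdeg
  have hlen' := congrArg (Nat.cast : ℕ → ℤ) hlen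
  simp only [natCast_degS, Fin.sum_univ_three, hr, hq] at hdeg'
  push_cast [Fin.sum_univ_three] at hdeg' hlen'
  have hkey : ((nu 1 : ℤ) - lam 1) * r = q * (-((nu 2 : ℤ) - lam 2)) := by
    have : (g : ℤ) * (((nu 1 : ℤ) - lam 1) * r + ((nu 2 : ℤ) - lam 2) * q) = 0 := by
      linear_combination -hdeg' + (a 0 : ℤ) * hlen'
    rcases mul_eq_zero.mp this with h | h
    · exact absurd (by exact_mod_cast h) hg
    · linear_combination h
  obtain ⟨c, hc⟩ : (q : ℤ) ∣ (nu 1 : ℤ) - lam 1 :=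
    (Nat.isCoprime_iff_coprime.mpr hqr).dvd_of_dvd_mul_right ⟨_, hkey⟩
  have h2 : (nu 2 : ℤ) - lam 2 = -c * r :=
    mul_left_cancel₀ (Nat.cast_ne_zero.mpr hq0) (by linear_combination hkey - r * hc)
  refine ⟨-c, fun i => ?_⟩
  fin_cases i <;> simp [tradeVec] <;> linarith

theorem ceq_le_of_coprime (hg : g ≠ 0) (hq0 : q ≠ 0) (hqr : q.Coprime r) (hrq : r ≤ q)
    (hr : a 1 = a 0 + r * g) (hq : a 2 = a 0 + q * g) : ceq a ≤ q :=
  ceq_le_of_forall_isEqChain a fun lam nu hdeg hlen => by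
    obtain ⟨k, hk⟩ := exists_eq_add_mul_tradeVec hg hq0 hqr hr hq hdeg hlen
    simpa only [sum_toNat_neg_tradeVec hrq] using
      isEqChain_of_eq_add_mul a (sum_tradeVec_mul hr hq) (sum_tradeVec q r) hk

theorem le_ceq_of_coprime (hg : g ≠ 0) (hq0 : q ≠ 0) (hqr : q.Coprime r) (hrq : r ≤ q)
    (hr : a 1 = a 0 + r * g) (hq : a 2 = a 0 + q * g) : (q : ℕ∞) ≤ ceq a := by
  have htrade :
      ∀ i, ((![q - r, 0, r] : Fin 3 → ℕ) i : ℤ) = ![0, q, 0] i + 1 * tradeVec q r i := by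
    intro i
    fin_cases i <;> simp [tradeVec, hrq]
  refine le_ceq_of_forall_le_factDist a rfl
    (degS_eq_of_eq_add_mul (sum_tradeVec_mul hr hq) htrade)
    (sum_eq_of_eq_add_mul (sum_tradeVec q r) htrade).symm
    (fun h => hq0 (by simpa using congrFun h 1)) fun x y hx hy hlen hne => ?_
  obtain ⟨k, hk⟩ := exists_eq_add_mul_tradeVec hg hq0 hqr hr hq (hx.trans hy.symm) hlen
  have hk0 : k ≠ 0 := by
    rintro rfl
    exact hne (funext fun i => by simpa using (hk i).symm)
  rw [factDist_eq_natAbs_mul (sum_tradeVec q r) hk, sum_toNat_neg_tradeVec hrq]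
  exact Nat.le_mul_of_pos_left q (Int.natAbs_pos.mpr hk0)

end ThreeGenerated

theorem ceq_three_generated_general
    (a : Fin 3 → ℕ)
    (hmono : StrictMono a) :
    ceq a = (((a 2 - a 0) / Nat.gcd (a 1 - a 0) (a 2 - a 0) : ℕ) : ℕ∞) := by
  have h01 : a 0 < a 1 := hmono (by decide)
  have h12 : a 1 < a 2 := hmono (by decide)
  set g := Nat.gcd (a 1 - a 0) (a 2 - a 0)
  have hg : g ≠ 0 := (Nat.gcd_pos_of_pos_left _ (by omega)).ne'
  have hr : a 1 = a 0 + (a 1 - a 0) / g * g := by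
    rw [Nat.div_mul_cancel (Nat.gcd_dvd_left _ _)]; omega
  have hq : a 2 = a 0 + (a 2 - a 0) / g * g := by
    rw [Nat.div_mul_cancel (Nat.gcd_dvd_right _ _)]; omega
  have hq0 : (a 2 - a 0) / g ≠ 0 :=
    (Nat.div_pos (Nat.gcd_le_right _ (by omega)) (Nat.pos_of_ne_zero hg)).ne'
  have hrq : (a 1 - a 0) / g ≤ (a 2 - a 0) / g := Nat.div_le_div_right (by omega)
  have hqr := (Nat.coprime_div_gcd_div_gcd (Nat.pos_of_ne_zero hg)).symm
  exact le_antisymm (ceq_le_of_coprime hg hq0 hqr hrq hr hq)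
    (le_ceq_of_coprime hg hq0 hqr hrq hr hq)

/-- **Corollary.** Let `S = ⟨a_1,a_2,a_3⟩ ⊆ ℕ` be a numerical semigroup given by its
minimal set of generators `a_1 < a_2 < a_3`.  Then
`c_eq(S) = (a_3 - a_1)/gcd(a_2 - a_1, a_3 - a_1)`. -/
theorem ceq_three_generated
    (a : Fin 3 → ℕ)
    (hmono : StrictMono a)
    -- `S` is a numerical semigroup:
    (hfin : {x : ℕ | x ∉ AddSubmonoid.closure (Set.range a)}.Finite)
    -- `{a_1,a_2,a_3}` is the minimal set of generators:
    (hmin : ∀ i, a i ∉ AddSubmonoid.closure (Set.range a \ {a i})) :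
    ceq a = (((a 2 - a 0) / Nat.gcd (a 1 - a 0) (a 2 - a 0) : ℕ) : ℕ∞) :=
  ceq_three_generated_general a hmono
end
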